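/- arXiv:1905.00809 — 2 statements merged into one kernel-verified Lean document; each statement's English description precedes it below -/
import Mathlib

section
/- Let G be a finite simple graph that is a tree (i.e., G is connected and contains no cycles), and suppose the vertex set of G is partitioned into two disjoint sets A and B such that every edge of G joins a vertex of A to a vertex of B. Suppose the edges of G are labeled by elements of {0,1}, that A is nonempty, and that every vertex of A is incident to at least one edge labeled 1. Then there exists a vertex b in B such that every edge of G incident to b is labeled 1. (This is the combinatorial Claim in the proof of the paper's main theorem, where the tree is the bipartite graph \hat{G} whose vertices are the singular pieces X_i and complementary pieces Y_j of an acyclic shadow, and an edge is labeled 1 exactly when the corresponding separating curve bounds a homology-S^1 piece.) -/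
/-- **Combinatorial Claim (tree version).**
Let `G` be a finite simple graph that is a tree, with vertex set partitioned into
disjoint sets `A` and `B` such that every edge joins a vertex of `A` to a vertex
of `B`.  Suppose the edges are labeled by `Bool` (where `true` stands for the
label `1`), `A` is nonempty, and every vertex of `A` is incident to at least one
edge labeled `1`.  Then there is a vertex `b ∈ B` all of whose incident edges
are labeled `1`. -/
theorem claim_tree_bipartite_label
    {V : Type*} [Fintype V] (G : SimpleGraph V) (hT : G.IsTree)
    (A B : Set V) (hdisj : Disjoint A B) (hcover : A ∪ B = Set.univ)
    (hbip : ∀ u v : V, G.Adj u v → (u ∈ A ∧ v ∈ B) ∨ (u ∈ B ∧ v ∈ A))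
    (ℓ : Sym2 V → Bool)
    (hA : A.Nonempty)
    (h1 : ∀ a ∈ A, ∃ v : V, G.Adj a v ∧ ℓ s(a, v) = true) :
    ∃ b ∈ B, ∀ v : V, G.Adj b v → ℓ s(b, v) = true := by
  classical
  by_contra hcon
  push_neg at hcon
  -- From every `b ∈ B` extract a `false`-labeled incident edge.
  have h0 : ∀ b ∈ B, ∃ v : V, G.Adj b v ∧ ℓ s(b, v) = false := by
    intro b hb
    obtain ⟨v, hv, hl⟩ := hcon b hb
    exact ⟨v, hv, by simpa using hl⟩
  choose fa hfa hfal using h1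
  choose fb hfb hfbl using h0
  -- neighbors chosen from A land in B and vice versa
  have hfaB : ∀ a (ha : a ∈ A), fa a ha ∈ B := by
    intro a ha
    rcases hbip a (fa a ha) (hfa a ha) with ⟨_, h⟩ | ⟨h, _⟩
    · exact h
    · exact absurd ha (Set.disjoint_right.mp hdisj h)
  have hfbA : ∀ b (hb : b ∈ B), fb b hb ∈ A := by
    intro b hb
    rcases hbip b (fb b hb) (hfb b hb) with ⟨h, _⟩ | ⟨_, h⟩
    · exact absurd hb (Set.disjoint_left.mp hdisj h)
    · exact h
  -- The two edge maps
  set gA : V → Sym2 V := fun a => if h : a ∈ A then s(a, fa a h) else s(a, a) with hgA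
  set gB : V → Sym2 V := fun b => if h : b ∈ B then s(b, fb b h) else s(b, b) with hgB
  set Et : Finset (Sym2 V) := G.edgeFinset.filter (fun e => ℓ e = true) with hEt
  set Ef : Finset (Sym2 V) := G.edgeFinset.filter (fun e => ℓ e = false) with hEf
  have hmapA : ∀ a ∈ A.toFinset, gA a ∈ Et := by
    intro a ha
    rw [Set.mem_toFinset] at ha
    simp only [hgA, dif_pos ha, hEt, Finset.mem_filter, SimpleGraph.mem_edgeFinset,
      SimpleGraph.mem_edgeSet]
    exact ⟨hfa a ha, hfal a ha⟩
  have hmapB : ∀ b ∈ B.toFinset, gB b ∈ Ef := by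
    intro b hb
    rw [Set.mem_toFinset] at hb
    simp only [hgB, dif_pos hb, hEf, Finset.mem_filter, SimpleGraph.mem_edgeFinset,
      SimpleGraph.mem_edgeSet]
    exact ⟨hfb b hb, hfbl b hb⟩
  have hinjA : Set.InjOn gA A.toFinset := by
    intro a ha a' ha' h
    simp only [Finset.mem_coe, Set.mem_toFinset] at ha ha'
    simp only [hgA, dif_pos ha, dif_pos ha', Sym2.eq_iff] at h
    rcases h with ⟨h, _⟩ | ⟨h, _⟩
    · exact h
    · exact absurd (h ▸ hfaB a' ha') (Set.disjoint_left.mp hdisj ha)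
  have hinjB : Set.InjOn gB B.toFinset := by
    intro b hb b' hb' h
    simp only [Finset.mem_coe, Set.mem_toFinset] at hb hb'
    simp only [hgB, dif_pos hb, dif_pos hb', Sym2.eq_iff] at h
    rcases h with ⟨h, _⟩ | ⟨h, _⟩
    · exact h
    · exact absurd (h ▸ hfbA b' hb') (Set.disjoint_right.mp hdisj hb)
  have hcardA : A.toFinset.card ≤ Et.card :=
    Finset.card_le_card_of_injOn gA hmapA hinjA
  have hcardB : B.toFinset.card ≤ Ef.card :=
    Finset.card_le_card_of_injOn gB hmapB hinjB
  have hdisjE : Disjoint Et Ef := by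
    rw [Finset.disjoint_left]
    intro e he hf
    rw [hEt, Finset.mem_filter] at he
    rw [hEf, Finset.mem_filter] at hf
    simp [he.2] at hf
  have hsub : Et ∪ Ef ⊆ G.edgeFinset := by
    intro e he
    rcases Finset.mem_union.mp he with h | h
    · exact (Finset.mem_filter.mp h).1
    · exact (Finset.mem_filter.mp h).1
  have hE : Et.card + Ef.card ≤ G.edgeFinset.card := by
    rw [← Finset.card_union_of_disjoint hdisjE]
    exact Finset.card_le_card hsub
  have hVcard : A.toFinset.card + B.toFinset.card = Fintype.card V := by
    rw [← Finset.card_union_of_disjoint (by simpa using hdisj)]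
    have : A.toFinset ∪ B.toFinset = Finset.univ := by
      ext x
      simp [← Set.mem_toFinset, ← Set.toFinset_union, hcover]
    rw [this, Finset.card_univ]
  have htree := hT.card_edgeFinset
  omega
end

section
/- Let G be a finite simple graph whose vertex set is partitioned into two disjoint sets A and B such that every edge of G joins a vertex of A to a vertex of B, and suppose the edges of G are labeled by elements of {0,1}. If A is nonempty, every vertex of A is incident to at least one edge labeled 1, and every vertex of B is incident to at least one edge labeled 0, then G contains a cycle (equivalently, G is not acyclic). (This is the contrapositive form of the combinatorial Claim in the proof of the paper's main theorem: starting from any vertex of A one alternately follows a 1-labeled edge and then a 0-labeled edge, producing a non-backtracking walk of arbitrary length, which in a finite graph forces a cycle.) -/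
open SimpleGraph

/-- Auxiliary: from a sequence of adjacent vertices we can build a walk with
controlled length and support. -/
lemma walk_of_seq {V : Type*} (G : SimpleGraph V) (y : ℕ → V)
    (hy : ∀ n, G.Adj (y n) (y (n+1))) :
    ∀ k m n, m + k = n → ∃ w : G.Walk (y m) (y n), w.length = k ∧
      (∀ v ∈ w.support, ∃ t, m ≤ t ∧ t ≤ n ∧ v = y t) ∧
      ((∀ p q, m ≤ p → p < q → q ≤ n → y p ≠ y q) → w.IsPath) := by
  intro k
  induction k with
  | zero =>
    intro m n h
    have hnm : n = m := by omega
    subst hnm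
    refine ⟨SimpleGraph.Walk.nil, rfl, ?_, fun _ => SimpleGraph.Walk.IsPath.nil⟩
    intro v hv
    simp only [SimpleGraph.Walk.support_nil, List.mem_singleton] at hv
    exact ⟨n, le_rfl, le_rfl, hv⟩
  | succ k IH =>
    intro m n h
    obtain ⟨w, hl, hs, hp⟩ := IH (m+1) n (by omega)
    refine ⟨SimpleGraph.Walk.cons (hy m) w, by simp [hl], ?_, ?_⟩
    · intro v hv
      rw [SimpleGraph.Walk.support_cons] at hv
      rcases List.mem_cons.mp hv with rfl | hv
      · exact ⟨m, le_rfl, by omega, rfl⟩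
      · obtain ⟨t, ht1, ht2, rfl⟩ := hs v hv
        exact ⟨t, by omega, ht2, rfl⟩
    · intro hinj
      rw [SimpleGraph.Walk.cons_isPath_iff]
      refine ⟨hp (fun p q hp1 hpq hq => hinj p q (by omega) hpq hq), ?_⟩
      intro hm
      obtain ⟨t, ht1, ht2, he⟩ := hs _ hm
      exact hinj m t le_rfl (by omega) ht2 he

/-- **Combinatorial Claim (contrapositive form).**
Let `G` be a finite simple graph with vertex set partitioned into disjoint sets
`A` and `B` such that every edge joins a vertex of `A` to a vertex of `B`, and
with edges labeled by `Bool` (`true` standing for the label `1`, `false` for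
`0`).  If `A` is nonempty, every vertex of `A` is incident to an edge labeled
`1`, and every vertex of `B` is incident to an edge labeled `0`, then `G`
contains a cycle, i.e. `G` is not acyclic. -/
theorem claim_bipartite_label_not_acyclic
    {V : Type*} [Fintype V] (G : SimpleGraph V)
    (A B : Set V) (hdisj : Disjoint A B) (hcover : A ∪ B = Set.univ)
    (hbip : ∀ u v : V, G.Adj u v → (u ∈ A ∧ v ∈ B) ∨ (u ∈ B ∧ v ∈ A))
    (ℓ : Sym2 V → Bool)
    (hA : A.Nonempty)
    (h1 : ∀ a ∈ A, ∃ v : V, G.Adj a v ∧ ℓ s(a, v) = true)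
    (h0 : ∀ b ∈ B, ∃ v : V, G.Adj b v ∧ ℓ s(b, v) = false) :
    ¬ G.IsAcyclic := by
  intro hac
  classical
  obtain ⟨a0, ha0⟩ := hA
  -- for every vertex pick a suitable neighbor
  have key : ∀ v : V, ∃ w, G.Adj v w ∧
      ((v ∈ A ∧ w ∈ B ∧ ℓ s(v, w) = true) ∨ (v ∈ B ∧ w ∈ A ∧ ℓ s(v, w) = false)) := by
    intro v
    have hv : v ∈ A ∪ B := by rw [hcover]; trivial
    rcases hv with hv | hv
    · obtain ⟨w, hw, hlw⟩ := h1 v hv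
      refine ⟨w, hw, Or.inl ⟨hv, ?_, hlw⟩⟩
      rcases hbip v w hw with ⟨_, hwB⟩ | ⟨hvB, _⟩
      · exact hwB
      · exact absurd (Set.mem_inter hv hvB) (by
          rw [Set.disjoint_iff_inter_eq_empty] at hdisj
          simp [hdisj])
    · obtain ⟨w, hw, hlw⟩ := h0 v hv
      refine ⟨w, hw, Or.inr ⟨hv, ?_, hlw⟩⟩
      rcases hbip v w hw with ⟨hvA, _⟩ | ⟨_, hwA⟩
      · exact absurd (Set.mem_inter hvA hv) (by
          rw [Set.disjoint_iff_inter_eq_empty] at hdisj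
          simp [hdisj])
      · exact hwA
  choose f hf using key
  set x : ℕ → V := fun n => f^[n] a0 with hx
  have hstep : ∀ n, x (n+1) = f (x n) := by
    intro n; simp [hx, Function.iterate_succ_apply']
  have hadj : ∀ n, G.Adj (x n) (x (n+1)) := by
    intro n; rw [hstep n]; exact (hf (x n)).1
  have halt : ∀ n, (x n ∈ A ∧ ℓ s(x n, x (n+1)) = true ∧ x (n+1) ∈ B) ∨
      (x n ∈ B ∧ ℓ s(x n, x (n+1)) = false ∧ x (n+1) ∈ A) := by
    intro n
    rcases (hf (x n)).2 with ⟨h1', h2', h3'⟩ | ⟨h1', h2', h3'⟩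
    · left; exact ⟨h1', by rw [hstep n]; exact h3', by rw [hstep n]; exact h2'⟩
    · right; exact ⟨h1', by rw [hstep n]; exact h3', by rw [hstep n]; exact h2'⟩
  have hnotAB : ∀ v : V, v ∈ A → v ∈ B → False := by
    intro v h1' h2'
    rw [Set.disjoint_iff_inter_eq_empty] at hdisj
    have : v ∈ A ∩ B := ⟨h1', h2'⟩
    simp [hdisj] at this
  have hlabdiff : ∀ n, ℓ s(x n, x (n+1)) ≠ ℓ s(x (n+1), x (n+2)) := by
    intro n
    rcases halt n with ⟨_, hl1, hm1⟩ | ⟨_, hl1, hm1⟩ <;>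
      rcases halt (n+1) with ⟨hm2, hl2, _⟩ | ⟨hm2, hl2, _⟩
    · exact (hnotAB _ hm2 hm1).elim
    · rw [hl1, hl2]; simp
    · rw [hl1, hl2]; simp
    · exact (hnotAB _ hm1 hm2).elim
  have hnb : ∀ n, x (n+2) ≠ x n := by
    intro n heq
    apply hlabdiff n
    have : s(x (n+1), x (n+2)) = s(x n, x (n+1)) := by
      rw [heq, Sym2.eq_swap]
    rw [this]
  -- pigeonhole
  have : ∃ a b : ℕ, a ≠ b ∧ x a = x b := by
    have := Finite.exists_ne_map_eq_of_infinite x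
    obtain ⟨a, b, hab, he⟩ := this
    exact ⟨a, b, hab, he⟩
  obtain ⟨a, b, hab, he⟩ := this
  have hQ : ∃ d, 0 < d ∧ ∃ i, x (i + d) = x i := by
    rcases Nat.lt_or_ge a b with h | h
    · exact ⟨b - a, by omega, a, by rw [show a + (b - a) = b by omega]; exact he.symm⟩
    · have h' : b < a := by omega
      exact ⟨a - b, by omega, b, by rw [show b + (a - b) = a by omega]; exact he⟩
  set d0 := Nat.find hQ with hd0
  obtain ⟨hd0pos, i, hxi⟩ := Nat.find_spec hQ
  rw [← hd0] at hxi hd0pos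
  have hmin : ∀ p q : ℕ, p < q → q - p < d0 → x p ≠ x q := by
    intro p q hpq hlt heq
    exact Nat.find_min hQ hlt ⟨by omega, p, by rw [show p + (q - p) = q by omega]; exact heq.symm⟩
  have hd0_ne1 : d0 ≠ 1 := by
    intro h
    rw [h] at hxi
    exact (hadj i).ne' hxi
  have hd0_ne2 : d0 ≠ 2 := by
    intro h
    rw [h] at hxi
    exact hnb i hxi
  have hd03 : 3 ≤ d0 := by omega
  -- two distinct paths from x i to x (i+1)
  have hP1 : (SimpleGraph.Walk.cons (hadj i) SimpleGraph.Walk.nil).IsPath := by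
    rw [SimpleGraph.Walk.cons_isPath_iff]
    refine ⟨SimpleGraph.Walk.IsPath.nil, ?_⟩
    simp [(hadj i).ne]
  obtain ⟨w, hl, hs, hp⟩ := walk_of_seq G x hadj (d0 - 1) (i + 1) (i + d0) (by omega)
  have hwpath : w.IsPath := by
    apply hp
    intro p q hp1 hpq hq
    exact hmin p q hpq (by omega)
  set w2 : G.Walk (x i) (x (i + 1)) := (w.copy rfl hxi).reverse with hw2
  have hw2path : w2.IsPath := by
    rw [hw2]
    exact ((SimpleGraph.Walk.isPath_copy _ rfl hxi).mpr hwpath).reverse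
  have hpaths := (SimpleGraph.isAcyclic_iff_path_unique.mp hac)
    ⟨SimpleGraph.Walk.cons (hadj i) SimpleGraph.Walk.nil, hP1⟩ ⟨w2, hw2path⟩
  have hlen : (1 : ℕ) = w2.length := by
    have h' := congrArg (fun p : G.Path (x i) (x (i+1)) => p.1.length) hpaths
    simpa using h'
  have hlen2 : w2.length = d0 - 1 := by
    rw [hw2, SimpleGraph.Walk.length_reverse, SimpleGraph.Walk.length_copy, hl]
  omega
end
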